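/- arXiv:math/0311312 — 7 statements merged into one kernel-verified Lean document; each statement's English description precedes it below -/
import Mathlib

section
/- Let e ≥ 0 be an integer and let f ∈ R[y]. Write f = g·Q_e(y) + A with A ∈ R[y] of degree at most e (division with remainder by the monic polynomial Q_e(y)). Then e!·(v−u)^e·(the coefficient of y^e in A) = Σ_{s=0}^{e} (−1)^s·binom(e,s)·f(−(e−s)·u − s·v), where f(−(e−s)·u − s·v) denotes the evaluation of f at the element −(e−s)·u − s·v of R. -/
noncomputable section

abbrev R2 : Type := MvPolynomial (Fin 2) ℚ

def uu : R2 := MvPolynomial.X 0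
def vv : R2 := MvPolynomial.X 1

/-- The involution of `R2 = ℚ[u,v]` swapping `u` and `v`; `P*`. -/
def swapUV (P : R2) : R2 := MvPolynomial.rename (Equiv.swap (0 : Fin 2) 1) P

/-- `Q_k(y) = ∏_{j=0}^{k} (y + j·u + (k−j)·v)` in `R2[y]`. -/
def Qp (k : ℕ) : Polynomial R2 :=
  ∏ j ∈ Finset.range (k + 1),
    (Polynomial.X + Polynomial.C ((j : R2) * uu + ((k - j : ℕ) : R2) * vv))

/-- `C_{d+1} = ∏_{j=0}^{d} (j·u + (d−j)·v)` in `R2`. -/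
def Cdtop (d : ℕ) : R2 :=
  ∏ j ∈ Finset.range (d + 1), ((j : R2) * uu + ((d - j : ℕ) : R2) * vv)

/-- `Q_k(x_i)` as an element of `R2[x_1,…,x_r]`. -/
def Qm (r k : ℕ) (i : Fin r) : MvPolynomial (Fin r) R2 :=
  ∏ j ∈ Finset.range (k + 1),
    (MvPolynomial.X i + MvPolynomial.C ((j : R2) * uu + ((k - j : ℕ) : R2) * vv))

/-!
The points `-((e - s)·u + s·v)`, `0 ≤ s ≤ e`, are exactly the roots of `Q_e`, so `f` and `A` agree
there. They form an arithmetic progression with step `v - u`, and the alternating sum is the `e`-th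
forward difference of `A` along it, which annihilates all monomials of degree `< e` and sends `y^e`
to `e! (v - u)^e`.
-/

open Polynomial Finset
open scoped Nat fwdDiff

namespace Polynomial

variable {S : Type*} [CommRing S]

theorem fwdDiff_iter_one_eval_of_natDegree_le {P : S[X]} {n : ℕ} (hP : P.natDegree ≤ n) (x : S) :
    (Δ_[1])^[n] P.eval x = n ! * P.coeff n := by
  rcases hP.lt_or_eq with hlt | rfl
  · rw [fwdDiff_iter_eq_zero_of_degree_lt hlt, coeff_eq_zero_of_natDegree_lt hlt]
    simp
  · rw [fwdDiff_iter_degree_eq_factorial, Pi.smul_apply, smul_eq_mul, mul_comm]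
    rfl

theorem coeff_comp_linear_of_natDegree_le {P : S[X]} {n : ℕ} (hP : P.natDegree ≤ n) (a d : S) :
    (P.comp (C a + C d * X)).coeff n = d ^ n * P.coeff n := by
  have hlin : (C a + C d * X).natDegree ≤ 1 := by compute_degree
  rw [comp, eval₂_eq_sum_range' C (Nat.lt_succ_of_le hP), finsetSum_coeff, sum_range_succ,
    sum_eq_zero fun i hi ↦ ?_, zero_add, coeff_C_mul]
  · have hd : (C a + C d * X).coeff 1 = d := by simp
    have htop := coeff_pow_of_natDegree_le (m := n) hlin
    rw [mul_one, hd] at htop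
    rw [htop, mul_comm]
  · rw [coeff_C_mul, coeff_eq_zero_of_natDegree_lt (p := (C a + C d * X) ^ i), mul_zero]
    exact (natDegree_pow_le_of_le i hlin).trans_lt (by simpa using mem_range.1 hi)

/-- Reduces to step `1` by substituting `y + h X` into `P`. -/
theorem fwdDiff_iter_eval_of_natDegree_le {P : S[X]} {n : ℕ} (hP : P.natDegree ≤ n) (h y : S) :
    (Δ_[h])^[n] P.eval y = n ! * h ^ n * P.coeff n := by
  have hcomp : (P.comp (C y + C h * X)).natDegree ≤ n :=
    natDegree_comp_le.trans <| (Nat.mul_le_mul hP (by compute_degree)).trans_eq (mul_one n)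
  calc (Δ_[h])^[n] P.eval y = (Δ_[1])^[n] (P.comp (C y + C h * X)).eval 0 := by
        simp only [fwdDiff_iter_eq_sum_shift, eval_comp, eval_add, eval_C, eval_mul, eval_X,
          zero_add, nsmul_eq_mul, mul_one, mul_comm h]
    _ = n ! * h ^ n * P.coeff n := by
        rw [fwdDiff_iter_one_eval_of_natDegree_le hcomp, coeff_comp_linear_of_natDegree_le hP,
          mul_assoc]

theorem sum_range_alternating_eval_of_natDegree_le {P : S[X]} {n : ℕ} (hP : P.natDegree ≤ n)
    (a b : S) :
    ∑ s ∈ range (n + 1), (-1 : S) ^ s * (n.choose s : S) * P.eval (-(((n - s : ℕ) : S) * a + s * b))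
      = n ! * (b - a) ^ n * P.coeff n := by
  rw [← fwdDiff_iter_eval_of_natDegree_le hP (b - a) (-(n * b)), fwdDiff_iter_eq_sum_shift]
  conv_rhs => rw [← sum_range_reflect]
  refine sum_congr rfl fun s hs ↦ ?_
  have hsn : s ≤ n := Nat.lt_succ_iff.1 (mem_range.1 hs)
  have harg : -(n * b) + (n - s) • (b - a) = -(((n - s : ℕ) : S) * a + s * b) := by
    rw [nsmul_eq_mul, Nat.cast_sub hsn]
    ring
  rw [Nat.add_sub_cancel, Nat.sub_sub_self hsn, Nat.choose_symm hsn, harg, zsmul_eq_mul]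
  push_cast
  ring

end Polynomial

theorem Qp_eval_eq_zero {k s : ℕ} (hs : s ≤ k) :
    (Qp k).eval (-(((k - s : ℕ) : R2) * uu + (s : R2) * vv)) = 0 := by
  rw [Qp, eval_prod]
  refine prod_eq_zero (mem_range.2 (Nat.lt_succ_of_le (Nat.sub_le k s))) ?_
  rw [eval_add, eval_X, eval_C, Nat.sub_sub_self hs]
  ring

/-- Lemma 3.2: the top coefficient of the reduced representative of `f` modulo `Q_e`. -/
theorem stmt0 (e : ℕ) (f g A : Polynomial R2) (hdeg : A.degree ≤ (e : ℕ))
    (hf : f = g * Qp e + A) :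
    (e.factorial : R2) * (vv - uu) ^ e * A.coeff e =
      ∑ s ∈ Finset.range (e + 1), (-1 : R2) ^ s * (e.choose s : R2) *
        Polynomial.eval (-(((e - s : ℕ) : R2) * uu + (s : R2) * vv)) f := by
  have hA : A.natDegree ≤ e := natDegree_le_iff_degree_le.2 hdeg
  rw [← sum_range_alternating_eval_of_natDegree_le hA uu vv]
  refine sum_congr rfl fun s hs ↦ ?_
  rw [hf, eval_add, eval_mul, Qp_eval_eq_zero (Nat.lt_succ_iff.1 (mem_range.1 hs)), mul_zero,
    zero_add]
end
end

section
/- There exists exactly one reduced polynomial F ∈ R[x_1,…,x_r] such that (Σ_{i=1}^r i·x_i)·F + C_{d+1} lies in the ideal of R[x_1,…,x_r] generated by Q_{e_1}(x_1),…,Q_{e_r}(x_r). -/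
/-!
Let `I = (Q_{e_1}(x_1), …, Q_{e_r}(x_r))`. Each `Q_{e_i}` splits with `e_i + 1` distinct roots
`-(j·u + (e_i−j)·v)`, so by the combinatorial Nullstellensatz `I` is the ideal of polynomials
vanishing on the grid of these roots, and a reduced polynomial vanishing there is zero; the
division algorithm gives every polynomial a reduced representative modulo `I`.
On the grid, `L = Σ i·x_i` takes values among the roots of `Q_d`, so `Q_d(L) ∈ I`; as
`Q_d(L) ≡ Q_d(0) = C_{d+1}` modulo `L`, reducing `(Q_d(L) − C_{d+1}) / L` yields `F`.
Since `d ≥ 1`, `0` is not a root of `Q_d`, so `L` does not vanish on the grid, and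
`L·(F − F') ∈ I` forces the reduced `F − F'` to vanish there, i.e. `F = F'`.
-/

noncomputable section

open MvPolynomial Finset

namespace MvPolynomial

variable {R σ : Type*} [CommRing R]

theorem degree_prod_X_sub_C [Nontrivial R] (m : MonomialOrder σ) (S : Finset R) (i : σ) :
    m.degree (∏ s ∈ S, (X i - C s)) = Finsupp.single i #S := by
  rw [m.degree_prod_of_regular fun s _ => by
    rw [(m.monic_X_sub_C i s).leadingCoeff_eq_one]; exact isRegular_one]
  simp [m.degree_X_sub_C]

theorem exists_degreeOf_le_sub_mem_span (m : MonomialOrder σ) {b : σ → MvPolynomial σ R}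
    {n : σ → ℕ} (hb : ∀ i, m.Monic (b i))
    (hdeg : ∀ i, m.degree (b i) = Finsupp.single i (n i + 1)) (f : MvPolynomial σ R) :
    ∃ F : MvPolynomial σ R, (∀ i, F.degreeOf i ≤ n i) ∧
      f - F ∈ Ideal.span (Set.range b) := by
  obtain ⟨g, F, hfg, -, hF⟩ :=
    m.div (fun i => by rw [(hb i).leadingCoeff_eq_one]; exact isUnit_one) f
  refine ⟨F, fun i => degreeOf_le_iff.2 fun c hc => ?_, ?_⟩
  · have := hF c hc i
    rw [hdeg, Finsupp.single_le_iff] at this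
    omega
  · rw [hfg, add_sub_cancel_right, Ideal.span, ← Finsupp.range_linearCombination]
    exact LinearMap.mem_range_self _ g

theorem mem_span_prod_X_sub_C_iff [IsDomain R] [Finite σ] {S : σ → Finset R}
    (hS : ∀ i, (S i).Nonempty) {f : MvPolynomial σ R} :
    f ∈ Ideal.span (Set.range fun i => ∏ s ∈ S i, (X i - C s)) ↔
      ∀ x : σ → R, (∀ i, x i ∈ S i) → eval x f = 0 := by
  constructor
  · intro hf x hx
    refine (Ideal.span_le (I := RingHom.ker (eval x)).2 ?_ hf : _)
    rintro _ ⟨i, rfl⟩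
    simpa [eval_prod] using prod_eq_zero (hx i) (sub_self (x i))
  · intro hf
    obtain ⟨h, -, rfl⟩ := combinatorial_nullstellensatz_exists_linearCombination S hS f hf
    rw [Ideal.span, ← Finsupp.range_linearCombination]
    exact LinearMap.mem_range_self _ h

theorem eq_zero_of_mul_mem_span_prod_X_sub_C [IsDomain R] [Finite σ] {S : σ → Finset R}
    {L F : MvPolynomial σ R} (hL : ∀ x : σ → R, (∀ i, x i ∈ S i) → eval x L ≠ 0)
    (hF : ∀ i, F.degreeOf i < #(S i))
    (h : L * F ∈ Ideal.span (Set.range fun i => ∏ s ∈ S i, (X i - C s))) : F = 0 := by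
  have hS : ∀ i, (S i).Nonempty := fun i => card_pos.1 (Nat.zero_lt_of_lt (hF i))
  refine eq_zero_of_eval_zero_at_prod_finset F S hF fun x hx => ?_
  have := (mem_span_prod_X_sub_C_iff hS).1 h x hx
  rw [map_mul] at this
  exact (mul_eq_zero.1 this).resolve_left (hL x hx)

end MvPolynomial

def qRoots (k : ℕ) : Finset R2 :=
  (range (k + 1)).image fun j : ℕ => -((j : R2) * uu + ((k - j : ℕ) : R2) * vv)

lemma eval_natCast_mul_uu_add_natCast_mul_vv (p : Fin 2 → ℚ) (a b : ℕ) :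
    eval p ((a : R2) * uu + (b : R2) * vv) = a * p 0 + b * p 1 := by
  simp [uu, vv]

lemma natCast_mul_uu_add_natCast_mul_vv_inj {a b a' b' : ℕ}
    (h : (a : R2) * uu + (b : R2) * vv = (a' : R2) * uu + (b' : R2) * vv) : a = a' ∧ b = b' := by
  have hu := congrArg (eval ![1, 0]) h
  have hv := congrArg (eval ![0, 1]) h
  simp only [eval_natCast_mul_uu_add_natCast_mul_vv] at hu hv
  simp only [Matrix.cons_val_zero, Matrix.cons_val_one, mul_one, mul_zero, add_zero,
    zero_add, Nat.cast_inj] at hu hv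
  exact ⟨hu, hv⟩

lemma mem_qRoots {k : ℕ} {s : R2} :
    s ∈ qRoots k ↔ ∃ a b : ℕ, a + b = k ∧ s = -((a : R2) * uu + (b : R2) * vv) := by
  simp only [qRoots, mem_image, mem_range]
  constructor
  · rintro ⟨j, hj, rfl⟩
    exact ⟨j, k - j, by omega, rfl⟩
  · rintro ⟨a, b, rfl, rfl⟩
    exact ⟨a, by omega, by rw [Nat.add_sub_cancel_left]⟩

lemma card_qRoots (k : ℕ) : #(qRoots k) = k + 1 := by
  rw [qRoots, card_image_of_injective _ fun j j' h =>
    (natCast_mul_uu_add_natCast_mul_vv_inj (neg_injective h)).1, card_range]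

lemma zero_notMem_qRoots {k : ℕ} (hk : k ≠ 0) : (0 : R2) ∉ qRoots k := by
  rw [mem_qRoots]
  rintro ⟨a, b, rfl, h⟩
  have h1 := congrArg (eval 1) h
  rw [map_neg, eval_natCast_mul_uu_add_natCast_mul_vv, map_zero] at h1
  simp only [Pi.one_apply, mul_one] at h1
  have : ((a + b : ℕ) : ℚ) = 0 := by push_cast; linarith
  exact hk (by exact_mod_cast this)

lemma sum_nsmul_mem_qRoots {ι : Type*} (s : Finset ι) (c k : ι → ℕ) {x : ι → R2}
    (hx : ∀ i ∈ s, x i ∈ qRoots (k i)) :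
    ∑ i ∈ s, c i • x i ∈ qRoots (∑ i ∈ s, c i * k i) := by
  choose! a b hab hx using fun i hi => mem_qRoots.1 (hx i hi)
  refine mem_qRoots.2 ⟨∑ i ∈ s, c i * a i, ∑ i ∈ s, c i * b i, ?_, ?_⟩
  · rw [← sum_add_distrib]
    exact sum_congr rfl fun i hi => by rw [← mul_add, hab i hi]
  · rw [sum_congr rfl fun i hi => by rw [hx i hi]]
    push_cast
    simp only [smul_neg, sum_neg_distrib, smul_add, sum_add_distrib, nsmul_eq_mul, sum_mul,
      mul_assoc]

lemma Qp_eq_prod_qRoots (k : ℕ) : Qp k = ∏ s ∈ qRoots k, (Polynomial.X - Polynomial.C s) := by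
  rw [qRoots, prod_image fun j _ j' _ h =>
    (natCast_mul_uu_add_natCast_mul_vv_inj (neg_injective h)).1, Qp]
  simp only [map_neg, sub_neg_eq_add]

lemma Qm_eq_aeval (r k : ℕ) (i : Fin r) : Qm r k i = Polynomial.aeval (X i) (Qp k) := by
  simp only [Qm, Qp, map_prod, map_add, Polynomial.aeval_X, Polynomial.aeval_C, algebraMap_eq]

lemma Cdtop_eq_coeff_zero (d : ℕ) : Cdtop d = (Qp d).coeff 0 := by
  simp only [Cdtop, Qp, Polynomial.coeff_zero_eq_eval_zero, Polynomial.eval_prod,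
    Polynomial.eval_add, Polynomial.eval_X, Polynomial.eval_C, zero_add]

variable {σ : Type*}

def qIdeal (e : σ → ℕ) : Ideal (MvPolynomial σ R2) :=
  Ideal.span (Set.range fun i => ∏ s ∈ qRoots (e i), (X i - C s))

lemma span_range_Qm_eq_qIdeal (r : ℕ) (e : Fin r → ℕ) :
    Ideal.span (Set.range fun i : Fin r => Qm r (e i) i) = qIdeal e := by
  simp only [qIdeal, Qm_eq_aeval, Qp_eq_prod_qRoots, map_prod, map_sub, Polynomial.aeval_X,
    Polynomial.aeval_C, algebraMap_eq]

lemma mem_qIdeal_iff [Finite σ] {e : σ → ℕ} {f : MvPolynomial σ R2} :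
    f ∈ qIdeal e ↔ ∀ x : σ → R2, (∀ i, x i ∈ qRoots (e i)) → eval x f = 0 :=
  mem_span_prod_X_sub_C_iff fun i => card_pos.1 (by simp [card_qRoots])

lemma eval_sum_mul_X_mem_qRoots [Fintype σ] (c e : σ → ℕ) {x : σ → R2}
    (hx : ∀ i, x i ∈ qRoots (e i)) :
    eval x (∑ i, (c i : MvPolynomial σ R2) * X i) ∈ qRoots (∑ i, c i * e i) := by
  simpa [nsmul_eq_mul] using sum_nsmul_mem_qRoots univ c e fun i _ => hx i

lemma aeval_Qp_mem_qIdeal [Finite σ] {e : σ → ℕ} {d : ℕ} {L : MvPolynomial σ R2}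
    (hL : ∀ x : σ → R2, (∀ i, x i ∈ qRoots (e i)) → eval x L ∈ qRoots d) :
    Polynomial.aeval L (Qp d) ∈ qIdeal e := by
  refine mem_qIdeal_iff.2 fun x hx => ?_
  simp only [Qp_eq_prod_qRoots, map_prod, map_sub, Polynomial.aeval_X, Polynomial.aeval_C,
    algebraMap_eq, eval_C]
  exact prod_eq_zero (hL x hx) (sub_self _)

lemma dvd_aeval_Qp_sub_C (L : MvPolynomial σ R2) (d : ℕ) :
    L ∣ Polynomial.aeval L (Qp d) - C (Cdtop d) := by
  simpa [Cdtop_eq_coeff_zero, algebraMap_eq] using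
    map_dvd (Polynomial.aeval L) (Polynomial.X_dvd_sub_C (p := Qp d))

lemma exists_degreeOf_le_sub_mem_qIdeal [LinearOrder σ] [WellFoundedGT σ] (e : σ → ℕ)
    (f : MvPolynomial σ R2) :
    ∃ F : MvPolynomial σ R2, (∀ i, F.degreeOf i ≤ e i) ∧ f - F ∈ qIdeal e :=
  exists_degreeOf_le_sub_mem_span MonomialOrder.lex
    (fun i => MonomialOrder.Monic.prod fun s _ => MonomialOrder.monic_X_sub_C _ i s)
    (fun i => by rw [degree_prod_X_sub_C, card_qRoots]) f

lemma eq_zero_of_mul_mem_qIdeal [Finite σ] {e : σ → ℕ} {L F : MvPolynomial σ R2}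
    (hL : ∀ x : σ → R2, (∀ i, x i ∈ qRoots (e i)) → eval x L ≠ 0)
    (hF : ∀ i, F.degreeOf i ≤ e i) (h : L * F ∈ qIdeal e) : F = 0 :=
  eq_zero_of_mul_mem_span_prod_X_sub_C hL
    (fun i => by rw [card_qRoots]; exact Nat.lt_succ_of_le (hF i)) h

theorem stmt1_general (r : ℕ) (e : Fin r → ℕ) (he : ∃ i, e i ≠ 0)
    (d : ℕ) (hd : d = ∑ i, (i.1 + 1) * e i) :
    ∃! F : MvPolynomial (Fin r) R2,
      (∀ i, F.degreeOf i ≤ e i) ∧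
      (∑ i, ((i.1 + 1 : ℕ) : MvPolynomial (Fin r) R2) * MvPolynomial.X i) * F
          + MvPolynomial.C (Cdtop d)
        ∈ Ideal.span (Set.range fun i : Fin r => Qm r (e i) i) := by
  rw [span_range_Qm_eq_qIdeal]
  set L : MvPolynomial (Fin r) R2 := ∑ i, ((i.1 + 1 : ℕ) : MvPolynomial (Fin r) R2) * X i
  have hd0 : d ≠ 0 := by
    obtain ⟨i, hi⟩ := he
    have := single_le_sum (f := fun i : Fin r => (i.1 + 1) * e i) (fun _ _ => Nat.zero_le _)
      (mem_univ i)
    nlinarith [Nat.pos_of_ne_zero hi]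
  have hL : ∀ x : Fin r → R2, (∀ i, x i ∈ qRoots (e i)) → eval x L ∈ qRoots d :=
    fun x hx => by
      simpa only [hd] using eval_sum_mul_X_mem_qRoots (fun i : Fin r => i.1 + 1) e hx
  obtain ⟨H, hH⟩ := dvd_aeval_Qp_sub_C L d
  obtain ⟨F, hF, hHF⟩ := exists_degreeOf_le_sub_mem_qIdeal e H
  have hFsol : L * F + C (Cdtop d) ∈ qIdeal e := by
    rw [show L * F + C (Cdtop d) = Polynomial.aeval L (Qp d) - L * (H - F) by
      linear_combination -hH]
    exact sub_mem (aeval_Qp_mem_qIdeal hL) (Ideal.mul_mem_left _ _ hHF)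
  refine ⟨F, ⟨hF, hFsol⟩, fun F' ⟨hF', hF'sol⟩ => sub_eq_zero.1 ?_⟩
  refine eq_zero_of_mul_mem_qIdeal (fun x hx h0 => zero_notMem_qRoots hd0 (h0 ▸ hL x hx))
    (fun i => (degreeOf_sub_le _ _ _).trans (max_le (hF' i) (hF i))) ?_
  convert sub_mem hF'sol hFsol using 1
  ring

/-- There is exactly one reduced `F ∈ R[x_1,…,x_r]` with
`(Σ i·x_i)·F + C_{d+1} ∈ (Q_{e_1}(x_1),…,Q_{e_r}(x_r))`. -/
theorem stmt1 (r : ℕ) (hr : 1 ≤ r) (e : Fin r → ℕ) (he : ∃ i, e i ≠ 0)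
    (d : ℕ) (hd : d = ∑ i, (i.1 + 1) * e i) :
    ∃! F : MvPolynomial (Fin r) R2,
      (∀ i, F.degreeOf i ≤ e i) ∧
      (∑ i, ((i.1 + 1 : ℕ) : MvPolynomial (Fin r) R2) * MvPolynomial.X i) * F
          + MvPolynomial.C (Cdtop d)
        ∈ Ideal.span (Set.range fun i : Fin r => Qm r (e i) i) :=
  stmt1_general r e he d hd
end
end

section
/- Write Q_d(x) = Σ_{k=0}^{d+1} C_{d+1−k}·x^k with C_0 = 1, defining C_0,…,C_{d+1} ∈ R. If F ∈ R[x_1,…,x_r] is a reduced representative of q(Σ_{i=1}^r i·x_i), then (v−u)^n·(∏_{i=1}^r e_i!)·(the coefficient of ∏_{i=1}^r x_i^{e_i} in F) = Σ_{j=n}^{d} Σ_{j_1+⋯+j_r=j, j_i ≥ 0} C_{d−j}·(j!/(j_1!⋯j_r!))·∏_{i=1}^{r} [ Σ_{s_i=0}^{e_i} (−1)^{s_i}·binom(e_i,s_i)·(−i)^{j_i}·((e_i−s_i)·u + s_i·v)^{j_i} ]. -/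
/-!
The roots of `Q_k` are `Qroot k s = -((k - s)·u + s·v)`, `0 ≤ s ≤ k`, an arithmetic progression
with step `u - v`. The functional `gridDiff` takes the alternating binomial sum of the values of a
polynomial on the grid of common roots of `Q_{e_1}(x_1), …, Q_{e_r}(x_r)`; it is a mixed finite
difference of orders `e_1, …, e_r`. Hence it vanishes on the ideal of the `Q_{e_i}(x_i)`, and among
the monomials `x^m` with `m ≤ e` it kills all but `x^e`, which it sends to `(v - u)^n ∏ e_i!`.
Applied to a reduced `F` it gives the left-hand side; applied to `q(∑ i·x_i)`, expanded by the
multinomial theorem, it gives the right-hand side, the terms of degree `< n` dropping out.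
-/

noncomputable section

/-- The coefficients `C_m` of `Q_d(x) = Σ_{k=0}^{d+1} C_{d+1−k} x^k` (so `C_0 = 1`). -/
def Ccoef (d m : ℕ) : R2 := (Qp d).coeff (d + 1 - m)

open Finset MvPolynomial

section FiniteDifference

variable {S : Type*} [CommRing S]

theorem fwdDiff_iter_add_mul_pow {e m : ℕ} (hm : m ≤ e) (c t : S) :
    (fwdDiff 1)^[e] (fun x : S => (c + x * t) ^ m) 0 =
      if m = e then t ^ e * e.factorial else 0 := by
  have hexp : (fun x : S => (c + x * t) ^ m)
      = ∑ k ∈ range (m + 1), (t ^ k * c ^ (m - k) * m.choose k) • fun x : S => x ^ k := by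
    ext x
    simp only [add_comm c, add_pow, Finset.sum_apply, Pi.smul_apply, smul_eq_mul, mul_pow]
    exact sum_congr rfl fun k _ => by ring
  rw [hexp, fwdDiff_iter_finsetSum, Finset.sum_apply]
  simp only [fwdDiff_iter_const_smul, Pi.smul_apply, smul_eq_mul]
  split_ifs with hme
  · subst hme
    rw [sum_range_succ, sum_eq_zero fun k hk => by
      rw [fwdDiff_iter_pow_eq_zero_of_lt (by simpa using hk), Pi.zero_apply, mul_zero],
      fwdDiff_iter_eq_factorial]
    simp
  · exact sum_eq_zero fun k hk => by
      rw [fwdDiff_iter_pow_eq_zero_of_lt (by simp at hk; omega), Pi.zero_apply, mul_zero]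

theorem sum_range_neg_one_pow_mul_choose_mul_add_mul_pow {e m : ℕ} (hm : m ≤ e) (c t : S) :
    ∑ s ∈ range (e + 1), (-1 : S) ^ s * e.choose s * (c + s * t) ^ m
      = if m = e then (-t) ^ e * e.factorial else 0 := by
  have hsign : ∀ s ∈ range (e + 1), (-1 : S) ^ s = (-1) ^ e * (-1) ^ (e - s) := by
    intro s hs
    obtain ⟨j, rfl⟩ := Nat.exists_eq_add_of_le (Nat.lt_succ_iff.mp (mem_range.mp hs))
    rw [Nat.add_sub_cancel_left, pow_add, mul_assoc, ← mul_pow, neg_one_mul, neg_neg, one_pow,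
      mul_one]
  calc ∑ s ∈ range (e + 1), (-1 : S) ^ s * e.choose s * (c + s * t) ^ m
      = (-1) ^ e * (fwdDiff 1)^[e] (fun x : S => (c + x * t) ^ m) 0 := by
        rw [fwdDiff_iter_eq_sum_shift, mul_sum]
        refine sum_congr rfl fun s hs => ?_
        simp [hsign s hs, mul_assoc]
    _ = if m = e then (-t) ^ e * e.factorial else 0 := by
        rw [fwdDiff_iter_add_mul_pow hm]
        split_ifs with hme
        · rw [neg_pow]; ring
        · rw [mul_zero]

end FiniteDifference

section GridDiff

variable {σ S : Type*} [Fintype σ] [DecidableEq σ] [CommRing S]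

def gridDiff (e : σ → ℕ) (z : σ → ℕ → S) : MvPolynomial σ S →ₗ[S] S :=
  ∑ s ∈ Fintype.piFinset fun i => range (e i + 1),
    (∏ i, (-1 : S) ^ s i * (e i).choose (s i)) • (aeval fun i => z i (s i)).toLinearMap

variable (e : σ → ℕ) (z : σ → ℕ → S)

theorem gridDiff_apply (G : MvPolynomial σ S) :
    gridDiff e z G = ∑ s ∈ Fintype.piFinset fun i => range (e i + 1),
      (∏ i, (-1 : S) ^ s i * (e i).choose (s i)) * eval (fun i => z i (s i)) G := by
  simp [gridDiff, LinearMap.sum_apply]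

theorem gridDiff_eq_zero_of_eval_eq_zero {G : MvPolynomial σ S}
    (hG : ∀ s ∈ Fintype.piFinset fun i => range (e i + 1), eval (fun i => z i (s i)) G = 0) :
    gridDiff e z G = 0 := by
  rw [gridDiff_apply]
  exact sum_eq_zero fun s hs => by rw [hG s hs, mul_zero]

theorem gridDiff_prod_C_mul_X_pow (b : σ → S) (p : σ → ℕ) :
    gridDiff e z (∏ i, (C (b i) * X i) ^ p i) =
      ∏ i, ∑ s ∈ range (e i + 1), (-1 : S) ^ s * (e i).choose s * (b i * z i s) ^ p i := by
  rw [gridDiff_apply, prod_univ_sum]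
  refine sum_congr rfl fun s _ => ?_
  simp [prod_mul_distrib]

end GridDiff

theorem gridDiff_aeval_sum_C_mul_X {S : Type*} [CommRing S] {r d : ℕ} (e : Fin r → ℕ)
    (z : Fin r → ℕ → S) (b : Fin r → S) {q : Polynomial S} (hq : q.natDegree ≤ d) :
    gridDiff e z (Polynomial.aeval (∑ i, C (b i) * X i) q) =
      ∑ k ∈ range (d + 1), ∑ p ∈ Nat.antidiagonalTuple r k,
        q.coeff k * (Nat.multinomial univ p : S) *
          ∏ i, ∑ s ∈ range (e i + 1), (-1 : S) ^ s * (e i).choose s * (b i * z i s) ^ p i := by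
  rw [Polynomial.aeval_eq_sum_range' (Nat.lt_succ_of_le hq), map_sum]
  refine sum_congr rfl fun k _ => ?_
  rw [sum_pow_eq_sum_piAntidiag, piAntidiag_univ_fin_eq_antidiagonalTuple, map_smul, map_sum,
    smul_eq_mul, mul_sum]
  refine sum_congr rfl fun p _ => ?_
  rw [← C_eq_coe_nat, C_mul', map_smul, gridDiff_prod_C_mul_X_pow, smul_eq_mul, mul_assoc]

def Qroot (k s : ℕ) : R2 := -(((k - s : ℕ) : R2) * uu + (s : R2) * vv)

theorem eval_Qm_eq_zero {r k s : ℕ} (hs : s ≤ k) (i : Fin r) {x : Fin r → R2}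
    (hx : x i = Qroot k s) : eval x (Qm r k i) = 0 := by
  rw [Qm, map_prod]
  refine prod_eq_zero (mem_range.mpr (show k - s < k + 1 by omega)) ?_
  rw [map_add, eval_X, eval_C, hx, Qroot, Nat.sub_sub_self hs]
  ring

theorem sum_mul_Qroot_pow {k m : ℕ} (hm : m ≤ k) (b : R2) :
    ∑ s ∈ range (k + 1), (-1 : R2) ^ s * k.choose s * (b * Qroot k s) ^ m
      = if m = k then (b * (vv - uu)) ^ k * k.factorial else 0 := by
  have h := sum_range_neg_one_pow_mul_choose_mul_add_mul_pow hm (-(b * k * uu)) (-(b * (vv - uu)))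
  rw [neg_neg] at h
  rw [← h]
  refine sum_congr rfl fun s hs => ?_
  rw [Qroot, Nat.cast_sub (Nat.lt_succ_iff.mp (mem_range.mp hs))]
  ring_nf

theorem prod_sum_mul_Qroot_pow_eq_zero {σ : Type*} [Fintype σ] {e p : σ → ℕ}
    (h : ∑ i, p i < ∑ i, e i) (b : σ → R2) :
    ∏ i, ∑ s ∈ range (e i + 1), (-1 : R2) ^ s * (e i).choose s * (b i * Qroot (e i) s) ^ p i
      = 0 := by
  obtain ⟨i, -, hi⟩ := exists_lt_of_sum_lt h
  exact prod_eq_zero (mem_univ i) (by rw [sum_mul_Qroot_pow hi.le, if_neg hi.ne])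

theorem mul_Qroot_pow (b : R2) (k s m : ℕ) :
    (b * Qroot k s) ^ m = (-b) ^ m * (((k - s : ℕ) : R2) * uu + (s : R2) * vv) ^ m := by
  rw [Qroot, mul_neg, ← neg_mul, mul_pow]

section Reduced

variable {σ : Type*} [Fintype σ] [DecidableEq σ] (e : σ → ℕ)

theorem gridDiff_Qroot_monomial {m : σ →₀ ℕ} (hm : ∀ i, m i ≤ e i) (a : R2) :
    gridDiff e (fun i => Qroot (e i)) (monomial m a) =
      if m = Finsupp.equivFunOnFinite.symm e then
        a * ((vv - uu) ^ (∑ i, e i) * ∏ i, ((e i).factorial : R2)) else 0 := by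
  have hX : (m.prod fun i k => (X i : MvPolynomial σ R2) ^ k) = ∏ i, (C 1 * X i) ^ m i := by
    simp [Finsupp.prod_fintype]
  rw [monomial_eq, C_mul', map_smul, hX, gridDiff_prod_C_mul_X_pow, smul_eq_mul,
    prod_congr rfl fun i _ => sum_mul_Qroot_pow (hm i) 1]
  split_ifs with hme
  · subst hme
    simp [prod_mul_distrib, prod_pow_eq_pow_sum]
  · obtain ⟨i, hi⟩ : ∃ i, m i ≠ e i := by
      by_contra! hall
      exact hme (Finsupp.ext hall)
    rw [prod_eq_zero (mem_univ i) (if_neg hi), mul_zero]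

theorem gridDiff_Qroot_of_degreeOf_le {F : MvPolynomial σ R2} (hF : ∀ i, F.degreeOf i ≤ e i) :
    gridDiff e (fun i => Qroot (e i)) F =
      (vv - uu) ^ (∑ i, e i) * (∏ i, ((e i).factorial : R2)) *
        coeff (Finsupp.equivFunOnFinite.symm e) F := by
  have hle : ∀ m ∈ F.support, ∀ i, m i ≤ e i := fun m hm i =>
    (monomial_le_degreeOf i hm).trans (hF i)
  conv_lhs => rw [F.as_sum]
  rw [map_sum, sum_congr rfl fun m hm => gridDiff_Qroot_monomial e (hle m hm) _,
    sum_ite_eq']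
  split_ifs with he
  · ring
  · rw [notMem_support_iff.mp he, mul_zero]

end Reduced

theorem gridDiff_Qroot_eq_of_sub_mem_span {r : ℕ} (e : Fin r → ℕ) {G F : MvPolynomial (Fin r) R2}
    (h : G - F ∈ Ideal.span (Set.range fun i : Fin r => Qm r (e i) i)) :
    gridDiff e (fun i => Qroot (e i)) G = gridDiff e (fun i => Qroot (e i)) F := by
  rw [← sub_eq_zero, ← map_sub]
  refine gridDiff_eq_zero_of_eval_eq_zero _ _ fun s hs => ?_
  refine (Ideal.span_le (I := RingHom.ker (eval _)).mpr ?_ h :)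
  rintro _ ⟨i, rfl⟩
  exact eval_Qm_eq_zero (Nat.lt_succ_iff.mp (mem_range.mp (Fintype.mem_piFinset.mp hs i))) i rfl

theorem gridDiff_Qroot_aeval_sum_C_mul_X {r d : ℕ} (e : Fin r → ℕ) (b : Fin r → R2)
    {q : Polynomial R2} (hq : q.natDegree ≤ d) :
    gridDiff e (fun i => Qroot (e i)) (Polynomial.aeval (∑ i, C (b i) * X i) q) =
      ∑ k ∈ Icc (∑ i, e i) d, ∑ p ∈ Nat.antidiagonalTuple r k,
        q.coeff k * (Nat.multinomial univ p : R2) * ∏ i, ∑ s ∈ range (e i + 1),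
          (-1 : R2) ^ s * (e i).choose s * (b i * Qroot (e i) s) ^ p i := by
  rw [gridDiff_aeval_sum_C_mul_X e _ b hq]
  refine (sum_subset (fun k hk => mem_range.mpr (by simp at hk; omega)) ?_).symm
  intro k hkd hk
  refine sum_eq_zero fun p hp => ?_
  have hpe : ∑ i, p i < ∑ i, e i := by
    simp only [Nat.mem_antidiagonalTuple.mp hp, mem_range, mem_Icc, not_and_or, not_le] at hkd hk ⊢
    omega
  rw [prod_sum_mul_Qroot_pow_eq_zero hpe b, mul_zero]

theorem natDegree_Qp (k : ℕ) : (Qp k).natDegree = k + 1 := by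
  rw [Qp, Polynomial.natDegree_prod_of_monic _ _ fun j _ => Polynomial.monic_X_add_C _]
  simp only [Polynomial.natDegree_X_add_C, sum_const, card_range, smul_eq_mul, mul_one]

section DividedQp

variable {d : ℕ} {q : Polynomial R2}

theorem coeff_eq_coeff_Qp_succ (hq : Polynomial.X * q = Qp d - Polynomial.C (Cdtop d)) (k : ℕ) :
    q.coeff k = (Qp d).coeff (k + 1) := by
  simpa [Polynomial.coeff_X_mul, Polynomial.coeff_C] using
    congrArg (Polynomial.coeff · (k + 1)) hq

theorem coeff_eq_Ccoef (hq : Polynomial.X * q = Qp d - Polynomial.C (Cdtop d)) {k : ℕ}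
    (hk : k ≤ d) : q.coeff k = Ccoef d (d - k) := by
  rw [coeff_eq_coeff_Qp_succ hq, Ccoef, show d + 1 - (d - k) = k + 1 by omega]

theorem natDegree_le_of_X_mul_eq (hq : Polynomial.X * q = Qp d - Polynomial.C (Cdtop d)) :
    q.natDegree ≤ d :=
  Polynomial.natDegree_le_iff_coeff_eq_zero.mpr fun k hk => by
    rw [coeff_eq_coeff_Qp_succ hq]
    exact Polynomial.coeff_eq_zero_of_natDegree_lt (by rw [natDegree_Qp]; omega)

end DividedQp

theorem stmt2_general (r : ℕ) (e : Fin r → ℕ)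
    (n d : ℕ) (hn : n = ∑ i, e i)
    (q : Polynomial R2) (hq : Polynomial.X * q = Qp d - Polynomial.C (Cdtop d))
    (F : MvPolynomial (Fin r) R2)
    (hred : ∀ i, F.degreeOf i ≤ e i)
    (hrep : Polynomial.aeval
          (∑ i, ((i.1 + 1 : ℕ) : MvPolynomial (Fin r) R2) * MvPolynomial.X i) q - F
        ∈ Ideal.span (Set.range fun i : Fin r => Qm r (e i) i)) :
    (vv - uu) ^ n * (∏ i, ((e i).factorial : R2)) *
        MvPolynomial.coeff (Finsupp.equivFunOnFinite.symm e) F =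
      ∑ j ∈ Finset.Icc n d, ∑ p ∈ Finset.Nat.antidiagonalTuple r j,
        Ccoef d (d - j) * (Nat.multinomial Finset.univ p : R2) *
          ∏ i, ∑ s ∈ Finset.range (e i + 1),
            (-1 : R2) ^ s * ((e i).choose s : R2) * (-((i.1 + 1 : ℕ) : R2)) ^ p i *
              (((e i - s : ℕ) : R2) * uu + (s : R2) * vv) ^ p i := by
  have hY : ∑ i, ((i.1 + 1 : ℕ) : MvPolynomial (Fin r) R2) * X i
      = ∑ i, C ((i.1 + 1 : ℕ) : R2) * X i := by
    simp only [map_natCast]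
  rw [hY] at hrep
  rw [hn, ← gridDiff_Qroot_of_degreeOf_le e hred, ← gridDiff_Qroot_eq_of_sub_mem_span e hrep,
    gridDiff_Qroot_aeval_sum_C_mul_X e _ (natDegree_le_of_X_mul_eq hq)]
  refine sum_congr rfl fun k hk => sum_congr rfl fun p _ => ?_
  rw [coeff_eq_Ccoef hq (mem_Icc.mp hk).2]
  simp only [mul_Qroot_pow, mul_assoc]

/-- Corollary 3.3 (the "naive" formula), with denominators cleared. -/
theorem stmt2 (r : ℕ) (hr : 1 ≤ r) (e : Fin r → ℕ) (he : ∃ i, e i ≠ 0)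
    (n d : ℕ) (hn : n = ∑ i, e i) (hd : d = ∑ i, (i.1 + 1) * e i)
    (q : Polynomial R2) (hq : Polynomial.X * q = Qp d - Polynomial.C (Cdtop d))
    (F : MvPolynomial (Fin r) R2)
    (hred : ∀ i, F.degreeOf i ≤ e i)
    (hrep : Polynomial.aeval
          (∑ i, ((i.1 + 1 : ℕ) : MvPolynomial (Fin r) R2) * MvPolynomial.X i) q - F
        ∈ Ideal.span (Set.range fun i : Fin r => Qm r (e i) i)) :
    (vv - uu) ^ n * (∏ i, ((e i).factorial : R2)) *
        MvPolynomial.coeff (Finsupp.equivFunOnFinite.symm e) F =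
      ∑ j ∈ Finset.Icc n d, ∑ p ∈ Finset.Nat.antidiagonalTuple r j,
        Ccoef d (d - j) * (Nat.multinomial Finset.univ p : R2) *
          ∏ i, ∑ s ∈ Finset.range (e i + 1),
            (-1 : R2) ^ s * ((e i).choose s : R2) * (-((i.1 + 1 : ℕ) : R2)) ^ p i *
              (((e i - s : ℕ) : R2) * uu + (s : R2) * vv) ^ p i :=
  stmt2_general r e n d hn q hq F hred hrep
end
end

section
/- If F ∈ R[x_1,…,x_r] is a reduced representative of q(Σ_{i=1}^r i·x_i), then (v−u)^n·(∏_{i=1}^r e_i!)·(the coefficient of ∏_{i=1}^r x_i^{e_i} in F) = Σ_{s_1=0}^{e_1} ⋯ Σ_{s_r=0}^{e_r} (−1)^{s_1+⋯+s_r}·(∏_{i=1}^r binom(e_i,s_i))·∏_{0 ≤ j ≤ d, j ≠ d − Σ_{i=1}^r i·s_i} (j·u + (d−j)·v). -/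
noncomputable section

/-!
At the points `x_i = -e_i u + s_i (u - v)` with `0 ≤ s_i ≤ e_i`, every `Q_{e_i}(x_i)` vanishes,
so `F` and `q(Σ i·x_i)` take the same value there. Moreover `y = Σ i·x_i = -(d - m) u - m v` with
`m = Σ i·s_i` is a root of `Q_d`, so `y q(y) = -C_{d+1}` and `q(y)` is the product of the
remaining `d` linear factors. On the other hand, the alternating binomial sum over the box of
points is an iterated forward difference with step `u - v` in each variable: on a polynomial of
degree at most `e_i` in `x_i` it kills every monomial except `∏ x_i ^ e_i`, which it sends to
`∏ e_i! (v - u) ^ e_i`.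
-/

open Finset Nat fwdDiff

theorem fwdDiff_iter_pow_apply {A : Type*} [CommRing A] (h c : A) {a e : ℕ} (hae : a ≤ e) :
    (Δ_[h])^[e] (fun x : A => x ^ a) c = if a = e then (e ! : A) * h ^ e else 0 := by
  have hshift :
      (Δ_[h])^[e] (fun x : A => x ^ a) c = (Δ_[1])^[e] (fun t : A => (c + t * h) ^ a) 0 := by
    simp [fwdDiff_iter_eq_sum_shift]
  have hexpand : (fun t : A => (c + t * h) ^ a) =
      fun t => ∑ k ∈ range (a + 1), (h ^ k * c ^ (a - k) * a.choose k) * t ^ k := by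
    ext t
    rw [add_comm, add_pow]
    exact sum_congr rfl fun k _ => by ring
  rw [hshift, hexpand]
  rcases hae.lt_or_eq with hlt | rfl
  · have hextend : ∀ t : A, ∑ k ∈ range (a + 1), (h ^ k * c ^ (a - k) * a.choose k) * t ^ k =
        ∑ k ∈ range e, (h ^ k * c ^ (a - k) * a.choose k) * t ^ k := fun t =>
      sum_subset (range_subset_range.mpr hlt) fun k _ hk => by
        rw [Nat.choose_eq_zero_of_lt (by simpa using hk)]; simp
    simp_rw [hextend, fwdDiff_iter_sum_mul_pow_eq_zero]
    simp [hlt.ne]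
  · have hsplit :
        (fun t : A => ∑ k ∈ range (a + 1), (h ^ k * c ^ (a - k) * a.choose k) * t ^ k) =
        (fun t => ∑ k ∈ range a, (h ^ k * c ^ (a - k) * a.choose k) * t ^ k) +
          h ^ a • fun t => t ^ a := by
      ext t; simp [sum_range_succ]
    rw [hsplit, fwdDiff_iter_add, fwdDiff_iter_sum_mul_pow_eq_zero, fwdDiff_iter_const_smul,
      fwdDiff_iter_eq_factorial]
    simp [mul_comm]

theorem sum_range_alternating_choose_mul_add_mul_pow {A : Type*} [CommRing A] (c h : A)
    {a e : ℕ} (hae : a ≤ e) :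
    ∑ k ∈ range (e + 1), (-1 : A) ^ k * (e.choose k : A) * (c + k * h) ^ a =
      if a = e then (e ! : A) * (-h) ^ e else 0 := by
  have hsign : ∀ k ∈ range (e + 1), (-1 : A) ^ k = (-1) ^ e * (-1) ^ (e - k) := fun k hk => by
    obtain ⟨j, rfl⟩ := Nat.exists_eq_add_of_le (Nat.lt_succ_iff.mp (mem_range.mp hk))
    rw [Nat.add_sub_cancel_left, pow_add, mul_assoc, ← pow_add, ← two_mul, pow_mul, neg_one_sq,
      one_pow, mul_one]
  calc ∑ k ∈ range (e + 1), (-1 : A) ^ k * (e.choose k : A) * (c + k * h) ^ a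
      = (-1) ^ e * ∑ k ∈ range (e + 1), ((-1 : ℤ) ^ (e - k) * e.choose k) • (c + k • h) ^ a := by
        rw [mul_sum]
        refine sum_congr rfl fun k hk => ?_
        rw [hsign k hk, nsmul_eq_mul, zsmul_eq_mul]
        push_cast
        ring
    _ = (-1) ^ e * (Δ_[h])^[e] (fun x : A => x ^ a) c := by rw [fwdDiff_iter_eq_sum_shift]
    _ = if a = e then (e ! : A) * (-h) ^ e else 0 := by
        rw [fwdDiff_iter_pow_apply h c hae]
        split_ifs
        · rw [neg_pow]; ring
        · rw [mul_zero]

section BoxDifference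

variable {σ A : Type*} [Fintype σ] [DecidableEq σ] [CommRing A] (e : σ → ℕ) (c h : σ → A)

theorem sum_piFinset_alternating_choose_mul_prod_pow {a : σ → ℕ} (ha : ∀ i, a i ≤ e i) :
    ∑ s ∈ Fintype.piFinset (fun i => range (e i + 1)),
        (-1 : A) ^ (∑ i, s i) * (∏ i, ((e i).choose (s i) : A)) *
          ∏ i, (c i + s i * h i) ^ a i =
      if a = e then ∏ i, ((e i)! : A) * (-h i) ^ e i else 0 := by
  calc _ = ∑ s ∈ Fintype.piFinset (fun i => range (e i + 1)),
          ∏ i, (-1 : A) ^ s i * ((e i).choose (s i) : A) * (c i + s i * h i) ^ a i := by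
        refine sum_congr rfl fun s _ => ?_
        rw [prod_mul_distrib, prod_mul_distrib, prod_pow_eq_pow_sum]
    _ = ∏ i, ∑ t ∈ range (e i + 1),
          (-1 : A) ^ t * ((e i).choose t : A) * (c i + t * h i) ^ a i :=
        (prod_univ_sum (fun i => range (e i + 1)) fun i t =>
          (-1 : A) ^ t * ((e i).choose t : A) * (c i + t * h i) ^ a i).symm
    _ = ∏ i, if a i = e i then ((e i)! : A) * (-h i) ^ e i else 0 :=
        prod_congr rfl fun i _ => sum_range_alternating_choose_mul_add_mul_pow _ _ (ha i)
    _ = _ := by rw [Fintype.prod_ite_zero]; exact if_congr funext_iff.symm rfl rfl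

theorem sum_piFinset_alternating_choose_mul_eval (G : MvPolynomial σ A)
    (hG : ∀ i, G.degreeOf i ≤ e i) :
    ∑ s ∈ Fintype.piFinset (fun i => range (e i + 1)),
        (-1 : A) ^ (∑ i, s i) * (∏ i, ((e i).choose (s i) : A)) *
          MvPolynomial.eval (fun i => c i + s i * h i) G =
      (∏ i, ((e i)! : A) * (-h i) ^ e i) * G.coeff (Finsupp.equivFunOnFinite.symm e) := by
  conv_lhs => rw [G.as_sum]
  simp only [map_sum, MvPolynomial.eval_monomial, mul_sum]
  rw [sum_comm]
  have hmonomial : ∀ a ∈ G.support,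
      ∑ s ∈ Fintype.piFinset (fun i => range (e i + 1)),
          (-1 : A) ^ (∑ i, s i) * (∏ i, ((e i).choose (s i) : A)) *
            (G.coeff a * a.prod fun i k => (c i + s i * h i) ^ k) =
        if a = Finsupp.equivFunOnFinite.symm e then
          G.coeff a * ∏ i, ((e i)! : A) * (-h i) ^ e i else 0 := by
    intro a ha
    have hae : ⇑a = e ↔ a = Finsupp.equivFunOnFinite.symm e := by
      rw [Equiv.eq_symm_apply]; rfl
    rw [← if_congr hae rfl rfl, ← mul_zero (G.coeff a), ← mul_ite,
      ← sum_piFinset_alternating_choose_mul_prod_pow e c h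
        fun i => (MvPolynomial.monomial_le_degreeOf i ha).trans (hG i), mul_sum]
    refine sum_congr rfl fun s _ => ?_
    rw [Finsupp.prod_fintype _ _ fun i => pow_zero _]
    ring
  rw [sum_congr rfl hmonomial, sum_ite_eq']
  split_ifs with he
  · ring
  · rw [MvPolynomial.notMem_support_iff.mp he, mul_zero]

end BoxDifference

theorem MvPolynomial.eval_polynomial_aeval {σ R : Type*} [CommRing R] (x : σ → R)
    (P : MvPolynomial σ R) (q : Polynomial R) :
    MvPolynomial.eval x (Polynomial.aeval P q) = q.eval (MvPolynomial.eval x P) := by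
  rw [Polynomial.aeval_def, Polynomial.hom_eval₂, MvPolynomial.algebraMap_eq, MvPolynomial.eval,
    MvPolynomial.eval₂Hom_comp_C, Polynomial.eval]

theorem linear_form_ne_zero {a b : ℕ} (hab : a + b ≠ 0) : (a : R2) * uu + (b : R2) * vv ≠ 0 := by
  intro h
  have hu := congrArg (MvPolynomial.eval ![1, 0]) h
  have hv := congrArg (MvPolynomial.eval ![0, 1]) h
  simp [uu, vv] at hu hv
  omega

theorem Qp_isRoot {j k : ℕ} (hjk : j ≤ k) :
    (Qp k).IsRoot (-((k : R2) * uu) + (j : R2) * (uu - vv)) := by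
  rw [Polynomial.IsRoot, Qp, Polynomial.eval_prod]
  refine prod_eq_zero (mem_range.mpr (Nat.lt_succ_of_le (Nat.sub_le k j))) ?_
  rw [Polynomial.eval_add, Polynomial.eval_X, Polynomial.eval_C, Nat.sub_sub_self hjk,
    Nat.cast_sub hjk]
  ring

theorem eval_Qm {r k : ℕ} (x : Fin r → R2) (i : Fin r) :
    MvPolynomial.eval x (Qm r k i) = (Qp k).eval (x i) := by
  simp [Qm, Qp, Polynomial.eval_prod]

theorem eval_eq_of_sub_mem_span_Qm {r : ℕ} {e : Fin r → ℕ} {x : Fin r → R2}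
    (hx : ∀ i, (Qp (e i)).IsRoot (x i)) {F G : MvPolynomial (Fin r) R2}
    (hFG : G - F ∈ Ideal.span (Set.range fun i => Qm r (e i) i)) :
    MvPolynomial.eval x F = MvPolynomial.eval x G := by
  have hker : Ideal.span (Set.range fun i => Qm r (e i) i) ≤ RingHom.ker (MvPolynomial.eval x) :=
    Ideal.span_le.mpr <| Set.range_subset_iff.mpr fun i => by
      rw [SetLike.mem_coe, RingHom.mem_ker, eval_Qm]
      exact hx i
  have := hker hFG
  rw [RingHom.mem_ker, map_sub, sub_eq_zero] at this
  exact this.symm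

theorem eval_of_X_mul_eq_Qp_sub_C {q : Polynomial R2} {d m : ℕ}
    (hq : Polynomial.X * q = Qp d - Polynomial.C (Cdtop d)) (hd : d ≠ 0) (hmd : m ≤ d) :
    q.eval (-((d : R2) * uu) + (m : R2) * (uu - vv)) =
      ∏ j ∈ (range (d + 1)).erase (d - m), ((j : R2) * uu + ((d - j : ℕ) : R2) * vv) := by
  set c : R2 := ((d - m : ℕ) : R2) * uu + ((d - (d - m) : ℕ) : R2) * vv with hc
  have hy : -((d : R2) * uu) + (m : R2) * (uu - vv) = -c := by
    rw [hc, Nat.sub_sub_self hmd, Nat.cast_sub hmd]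
    ring
  have hc0 : c ≠ 0 := linear_form_ne_zero (by omega)
  have hroot := Qp_isRoot (k := d) hmd
  rw [hy] at hroot ⊢
  have := congrArg (Polynomial.eval (-c)) hq
  rw [Polynomial.eval_mul, Polynomial.eval_X, Polynomial.eval_sub, hroot.eq_zero,
    Polynomial.eval_C, Cdtop, ← mul_prod_erase _ _ (mem_range.mpr (by omega : d - m < d + 1))]
    at this
  exact mul_left_cancel₀ hc0 (by linear_combination -this)

theorem eval_weighted_sum_X {r : ℕ} (e s : Fin r → ℕ) :
    MvPolynomial.eval (fun i => -((e i : R2) * uu) + (s i : R2) * (uu - vv))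
        (∑ i, ((i.1 + 1 : ℕ) : MvPolynomial (Fin r) R2) * MvPolynomial.X i) =
      -(((∑ i, (i.1 + 1) * e i : ℕ) : R2) * uu) +
        ((∑ i, (i.1 + 1) * s i : ℕ) : R2) * (uu - vv) := by
  simp only [map_sum, map_mul, map_natCast, MvPolynomial.eval_X]
  push_cast
  rw [sum_mul, sum_mul, ← sum_neg_distrib, ← sum_add_distrib]
  exact sum_congr rfl fun i _ => by ring

theorem stmt3_general (r : ℕ) (e : Fin r → ℕ) (he : ∃ i, e i ≠ 0)
    (n d : ℕ) (hn : n = ∑ i, e i) (hd : d = ∑ i, (i.1 + 1) * e i)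
    (q : Polynomial R2) (hq : Polynomial.X * q = Qp d - Polynomial.C (Cdtop d))
    (F : MvPolynomial (Fin r) R2)
    (hred : ∀ i, F.degreeOf i ≤ e i)
    (hrep : Polynomial.aeval
          (∑ i, ((i.1 + 1 : ℕ) : MvPolynomial (Fin r) R2) * MvPolynomial.X i) q - F
        ∈ Ideal.span (Set.range fun i : Fin r => Qm r (e i) i)) :
    (vv - uu) ^ n * (∏ i, ((e i).factorial : R2)) *
        MvPolynomial.coeff (Finsupp.equivFunOnFinite.symm e) F =
      ∑ s ∈ Fintype.piFinset (fun i : Fin r => Finset.range (e i + 1)),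
        (-1 : R2) ^ (∑ i, s i) * (∏ i, ((e i).choose (s i) : R2)) *
          ∏ j ∈ (Finset.range (d + 1)).erase (d - ∑ i, (i.1 + 1) * s i),
            ((j : R2) * uu + ((d - j : ℕ) : R2) * vv) := by
  obtain ⟨i₀, hi₀⟩ := he
  have hd0 : d ≠ 0 := by
    rw [hd, Ne, sum_eq_zero_iff]
    exact fun h => hi₀ (by simpa using h i₀ (mem_univ i₀))
  have heval : ∀ s ∈ Fintype.piFinset (fun i : Fin r => range (e i + 1)),
      MvPolynomial.eval (fun i => -((e i : R2) * uu) + (s i : R2) * (uu - vv)) F =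
        ∏ j ∈ (range (d + 1)).erase (d - ∑ i, (i.1 + 1) * s i),
          ((j : R2) * uu + ((d - j : ℕ) : R2) * vv) := by
    intro s hs
    have hse : ∀ i, s i ≤ e i := fun i =>
      Nat.lt_succ_iff.mp (mem_range.mp (Fintype.mem_piFinset.mp hs i))
    have hsd : ∑ i, (i.1 + 1) * s i ≤ d :=
      hd ▸ sum_le_sum fun i _ => Nat.mul_le_mul_left _ (hse i)
    rw [eval_eq_of_sub_mem_span_Qm (fun i => Qp_isRoot (hse i)) hrep,
      MvPolynomial.eval_polynomial_aeval, eval_weighted_sum_X, ← hd,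
      eval_of_X_mul_eq_Qp_sub_C hq hd0 hsd]
  calc (vv - uu) ^ n * (∏ i, ((e i).factorial : R2)) *
        MvPolynomial.coeff (Finsupp.equivFunOnFinite.symm e) F
      = (∏ i, ((e i)! : R2) * (-(uu - vv)) ^ e i) *
          MvPolynomial.coeff (Finsupp.equivFunOnFinite.symm e) F := by
        rw [prod_mul_distrib, prod_pow_eq_pow_sum, ← hn, neg_sub, mul_comm ((vv - uu) ^ n)]
    _ = _ := (sum_piFinset_alternating_choose_mul_eval e (fun i => -((e i : R2) * uu))
          (fun _ => uu - vv) F hred).symm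
    _ = _ := sum_congr rfl fun s hs => by rw [heval s hs]

/-- Theorem 3.4: the closed formula for the Thom polynomial of the coincident root
locus `X_λ`, `λ = (1^{e_1}⋯r^{e_r})`, with denominators cleared. -/
theorem stmt3 (r : ℕ) (hr : 1 ≤ r) (e : Fin r → ℕ) (he : ∃ i, e i ≠ 0)
    (n d : ℕ) (hn : n = ∑ i, e i) (hd : d = ∑ i, (i.1 + 1) * e i)
    (q : Polynomial R2) (hq : Polynomial.X * q = Qp d - Polynomial.C (Cdtop d))
    (F : MvPolynomial (Fin r) R2)
    (hred : ∀ i, F.degreeOf i ≤ e i)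
    (hrep : Polynomial.aeval
          (∑ i, ((i.1 + 1 : ℕ) : MvPolynomial (Fin r) R2) * MvPolynomial.X i) q - F
        ∈ Ideal.span (Set.range fun i : Fin r => Qm r (e i) i)) :
    (vv - uu) ^ n * (∏ i, ((e i).factorial : R2)) *
        MvPolynomial.coeff (Finsupp.equivFunOnFinite.symm e) F =
      ∑ s ∈ Fintype.piFinset (fun i : Fin r => Finset.range (e i + 1)),
        (-1 : R2) ^ (∑ i, s i) * (∏ i, ((e i).choose (s i) : R2)) *
          ∏ j ∈ (Finset.range (d + 1)).erase (d - ∑ i, (i.1 + 1) * s i),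
            ((j : R2) * uu + ((d - j : ℕ) : R2) * vv) :=
  stmt3_general r e he n d hn hd q hq F hred hrep
end
end

section
/- Let d = 2h with h ≥ 1. Then ∂(∏_{l=0}^{h} (l·v + (d−l)·u)) = h·(u+v)·∂(∏_{l=0}^{h−1} (l·v + (d−l)·u)) in R. -/
noncomputable section

/-! The last factor of `∏_{l=0}^{h} (l·v + (2h−l)·u)` is `h·(u+v)`, which is symmetric in `u, v`,
and the divided difference `∂` is linear over symmetric polynomials. -/

lemma uu_sub_vv_ne_zero : uu - vv ≠ 0 := by
  intro h
  have := congrArg (MvPolynomial.eval ![(1 : ℚ), 0]) h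
  simp [uu, vv] at this

lemma swapUV_mul (P Q : R2) : swapUV (P * Q) = swapUV P * swapUV Q :=
  map_mul _ P Q

lemma swapUV_natCast_mul_uu_add_vv (n : ℕ) : swapUV ((n : R2) * (uu + vv)) = n * (uu + vv) := by
  simp only [swapUV, uu, vv, map_mul, map_natCast, map_add, MvPolynomial.rename_X,
    Equiv.swap_apply_left, Equiv.swap_apply_right, add_comm (MvPolynomial.X 1 : R2)]

lemma divDiff_mul_of_swapUV_eq {P S D D' : R2} (hS : swapUV S = S)
    (hD : (uu - vv) * D = P - swapUV P)
    (hD' : (uu - vv) * D' = P * S - swapUV (P * S)) :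
    D' = S * D := by
  apply mul_left_cancel₀ uu_sub_vv_ne_zero
  rw [hD', swapUV_mul, hS]
  linear_combination (-S) * hD

lemma natCast_mul_vv_add_natCast_sub_mul_uu (h : ℕ) :
    (h : R2) * vv + ((2 * h - h : ℕ) : R2) * uu = h * (uu + vv) := by
  rw [show 2 * h - h = h by omega]
  ring

theorem stmt9_general (h : ℕ) (d : ℕ) (hd : d = 2 * h)
    (D1 D0 : R2)
    (hD1 : (uu - vv) * D1 =
        (∏ l ∈ Finset.range (h + 1), ((l : R2) * vv + ((d - l : ℕ) : R2) * uu)) -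
          swapUV (∏ l ∈ Finset.range (h + 1), ((l : R2) * vv + ((d - l : ℕ) : R2) * uu)))
    (hD0 : (uu - vv) * D0 =
        (∏ l ∈ Finset.range h, ((l : R2) * vv + ((d - l : ℕ) : R2) * uu)) -
          swapUV (∏ l ∈ Finset.range h, ((l : R2) * vv + ((d - l : ℕ) : R2) * uu))) :
    D1 = (h : R2) * (uu + vv) * D0 := by
  subst hd
  rw [Finset.prod_range_succ, natCast_mul_vv_add_natCast_sub_mul_uu] at hD1
  exact divDiff_mul_of_swapUV_eq (swapUV_natCast_mul_uu_add_vv h) hD0 hD1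

/-- Remark 3.9(1), first relation: `∂(∏_{l=0}^{h}(lv+(d−l)u)) = h(u+v)·∂(∏_{l=0}^{h−1}(lv+(d−l)u))`
for `d = 2h` (i.e. `Tp_{λ_1} = h·c_1·Tp_{λ_0}`). -/
theorem stmt9 (h : ℕ) (hh : 1 ≤ h) (d : ℕ) (hd : d = 2 * h)
    (D1 D0 : R2)
    (hD1 : (uu - vv) * D1 =
        (∏ l ∈ Finset.range (h + 1), ((l : R2) * vv + ((d - l : ℕ) : R2) * uu)) -
          swapUV (∏ l ∈ Finset.range (h + 1), ((l : R2) * vv + ((d - l : ℕ) : R2) * uu)))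
    (hD0 : (uu - vv) * D0 =
        (∏ l ∈ Finset.range h, ((l : R2) * vv + ((d - l : ℕ) : R2) * uu)) -
          swapUV (∏ l ∈ Finset.range h, ((l : R2) * vv + ((d - l : ℕ) : R2) * uu))) :
    D1 = (h : R2) * (uu + vv) * D0 :=
  stmt9_general h d hd D1 D0 hD1 hD0
end
end

section
/- Let d ≥ 1 and m ≥ 0 be integers with 2m < d, and set Π := ∏_{l=0}^{m} (l·v + (d−l)·u) ∈ R. Then every polynomial F ∈ R that divides both Π and ∂Π is a unit (a nonzero constant); i.e. gcd(Π, ∂Π) = 1. -/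
noncomputable section

/-! The factors `l·v + (d−l)·u` of `Π` are linear forms, hence prime, and `Π*` is the product of
the swapped forms `l·u + (d−l)·v`. A common divisor of `Π` and `∂Π` divides
`Π* = Π − (u−v)·∂Π`, so it suffices that no factor of `Π` divides a factor of `Π*`. The form
`l·v + (d−l)·u` vanishes at `(u, v) = (l, l−d)`, where `j·u + (d−j)·v` takes the value
`jl − (d−j)(d−l)`, which is negative for `j, l ≤ m < d/2`. -/

namespace MvPolynomial

theorem prime_C_mul_X_zero_add_C_mul_X_one {K : Type*} [Field K] {a : K} (b : K) (ha : a ≠ 0) :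
    Prime (C a * X 0 + C b * X 1 : MvPolynomial (Fin 2) K) := by
  have hmonic : Prime (Polynomial.X - Polynomial.C (C (-(a⁻¹ * b)) * X 0) :
      Polynomial (MvPolynomial (Fin 1) K)) := Polynomial.prime_X_sub_C _
  have himage : finSuccEquiv K 1 (C a * X 0 + C b * X 1) =
      Polynomial.C (C a) * (Polynomial.X - Polynomial.C (C (-(a⁻¹ * b)) * X 0)) := by
    have hX1 : (X 1 : MvPolynomial (Fin 2) K) = X (Fin.succ 0) := rfl
    rw [hX1, map_add, map_mul, map_mul, finSuccEquiv_X_zero, finSuccEquiv_X_succ,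
      finSuccEquiv_apply, finSuccEquiv_apply, eval₂Hom_C, eval₂Hom_C]
    simp only [RingHom.coe_comp, Function.comp_apply]
    rw [sub_eq_add_neg, ← Polynomial.C_neg, ← neg_mul, ← C_neg, neg_neg, mul_add,
      ← Polynomial.C_mul, ← Polynomial.C_mul, ← mul_assoc, ← C_mul, mul_inv_cancel_left₀ ha]
  rw [← MulEquiv.prime_iff (finSuccEquiv K 1), himage]
  have hunit : IsUnit (Polynomial.C (C a) : Polynomial (MvPolynomial (Fin 1) K)) :=
    (isUnit_iff_ne_zero.mpr ha).map (Polynomial.C.comp C)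
  exact (associated_unit_mul_left _ _ hunit).symm.prime hmonic

end MvPolynomial

open MvPolynomial Finset

def linFactor (d l : ℕ) : R2 := (l : R2) * vv + ((d - l : ℕ) : R2) * uu

theorem linFactor_eq (d l : ℕ) :
    linFactor d l = C ((d - l : ℕ) : ℚ) * X 0 + C (l : ℚ) * X 1 := by
  simp only [linFactor, uu, vv, map_natCast, add_comm]

theorem prime_linFactor {d l : ℕ} (hl : l < d) : Prime (linFactor d l) := by
  rw [linFactor_eq]
  exact prime_C_mul_X_zero_add_C_mul_X_one _ (by exact_mod_cast (Nat.sub_pos_of_lt hl).ne')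

theorem swapUV_prod {ι : Type*} (s : Finset ι) (f : ι → R2) :
    swapUV (∏ i ∈ s, f i) = ∏ i ∈ s, swapUV (f i) :=
  map_prod _ f s

theorem swapUV_linFactor (d l : ℕ) :
    swapUV (linFactor d l) = (l : R2) * uu + ((d - l : ℕ) : R2) * vv := by
  simp only [swapUV, linFactor, uu, vv, map_add, map_mul, map_natCast, rename_X,
    Equiv.swap_apply_left, Equiv.swap_apply_right]

theorem not_linFactor_dvd_swapUV_linFactor {d m j l : ℕ} (hm : 2 * m < d) (hj : j ≤ m)
    (hl : l ≤ m) : ¬ linFactor d l ∣ swapUV (linFactor d j) := by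
  rintro ⟨q, hq⟩
  rw [swapUV_linFactor] at hq
  have hzero := congrArg (eval ![(l : ℚ), -((d - l : ℕ) : ℚ)]) hq
  simp only [linFactor, uu, vv, map_add, map_mul, map_natCast, eval_X,
    Matrix.cons_val_zero, Matrix.cons_val_one] at hzero
  have hlt : j * l < (d - j) * (d - l) :=
    calc j * l ≤ m * m := Nat.mul_le_mul hj hl
      _ < (d - m) * (d - m) := Nat.mul_lt_mul_of_lt_of_lt (by omega) (by omega)
      _ ≤ (d - j) * (d - l) := Nat.mul_le_mul (by omega) (by omega)
  have hltQ : (j : ℚ) * l < ((d - j : ℕ) : ℚ) * ((d - l : ℕ) : ℚ) := by exact_mod_cast hlt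
  linarith

theorem isRelPrime_prod_linFactor_swapUV {d m : ℕ} (hm : 2 * m < d) :
    IsRelPrime (∏ l ∈ range (m + 1), linFactor d l)
      (swapUV (∏ l ∈ range (m + 1), linFactor d l)) := by
  rw [swapUV_prod]
  refine IsRelPrime.prod_left fun l hl => IsRelPrime.prod_right fun j hj => ?_
  rw [mem_range] at hl hj
  exact (prime_linFactor (by omega)).irreducible.isRelPrime_iff_not_dvd.2
    (not_linFactor_dvd_swapUV_linFactor hm (by omega) (by omega))

theorem stmt13_general (d m : ℕ) (hm : 2 * m < d)
    (D : R2)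
    (hD : (uu - vv) * D =
        (∏ l ∈ Finset.range (m + 1), ((l : R2) * vv + ((d - l : ℕ) : R2) * uu)) -
          swapUV (∏ l ∈ Finset.range (m + 1), ((l : R2) * vv + ((d - l : ℕ) : R2) * uu))) :
    ∀ F : R2,
      F ∣ (∏ l ∈ Finset.range (m + 1), ((l : R2) * vv + ((d - l : ℕ) : R2) * uu)) →
      F ∣ D → IsUnit F := by
  intro F hFP hFD
  have hFPswap := dvd_sub hFP (hFD.mul_left (uu - vv))
  rw [hD, sub_sub_cancel] at hFPswap
  exact isRelPrime_prod_linFactor_swapUV hm hFP hFPswap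

/-- `gcd(Π, ∂Π) = 1` for `Π = ∏_{l=0}^{m} (l·v + (d−l)·u)`, `2m < d`. -/
theorem stmt13 (d m : ℕ) (hd : 1 ≤ d) (hm : 2 * m < d)
    (D : R2)
    (hD : (uu - vv) * D =
        (∏ l ∈ Finset.range (m + 1), ((l : R2) * vv + ((d - l : ℕ) : R2) * uu)) -
          swapUV (∏ l ∈ Finset.range (m + 1), ((l : R2) * vv + ((d - l : ℕ) : R2) * uu))) :
    ∀ F : R2,
      F ∣ (∏ l ∈ Finset.range (m + 1), ((l : R2) * vv + ((d - l : ℕ) : R2) * uu)) →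
      F ∣ D → IsUnit F :=
  stmt13_general d m hm D hD
end
end

section
/- Let d = 2h with h > 2 and let 1 < j < h. Then (u+v) divides ∏_{l=h−j+1}^{h} (l·v + (d−l)·u), (u+v) does not divide ∏_{l=0}^{j−1} (l·v + (d−l)·u), and consequently (u+v) does not divide D_j, where D_j ∈ R is the unique polynomial with (u−v)·D_j = ∏_{l=h−j+1}^{h} (l·v + (d−l)·u) − ∏_{l=0}^{j−1} (l·v + (d−l)·u). -/
noncomputable section

/-!
Under `u ↦ 1, v ↦ -1` the factor `l·v + (d−l)·u` becomes `d − 2l`, so for `d = 2h` the only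
factor killed is the one with `l = h`, which is `h·(u+v)`. Hence `u+v` divides the product over
`[h−j+1, h]` but not the one over `[0, j)`, and then cannot divide `D_j` either, since
`(u−v)·D_j` is their difference.
-/

theorem not_dvd_of_mul_eq_sub {A : Type*} [CommRing A] {a b x y z : A} (hx : a ∣ x) (hy : ¬ a ∣ y)
    (hz : b * z = x - y) : ¬ a ∣ z := fun hz' =>
  hy <| by simpa [hz] using dvd_sub hx (hz'.mul_left b)

def linForm (d l : ℕ) : R2 := (l : R2) * vv + ((d - l : ℕ) : R2) * uu

theorem uu_add_vv_dvd_linForm_two_mul_self (h : ℕ) : uu + vv ∣ linForm (2 * h) h :=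
  ⟨h, by rw [linForm, show 2 * h - h = h by omega]; ring⟩

theorem uu_add_vv_dvd_prod_linForm {s : Finset ℕ} {h : ℕ} (hs : h ∈ s) :
    uu + vv ∣ ∏ l ∈ s, linForm (2 * h) l :=
  (uu_add_vv_dvd_linForm_two_mul_self h).trans (Finset.dvd_prod_of_mem _ hs)

abbrev evalOneNegOne : R2 →+* ℚ := MvPolynomial.eval ![1, -1]

theorem evalOneNegOne_uu_add_vv : evalOneNegOne (uu + vv) = 0 := by
  simp [uu, vv]

theorem evalOneNegOne_linForm {d l : ℕ} (hl : l ≤ d) :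
    evalOneNegOne (linForm d l) = d - 2 * l := by
  simp only [linForm, uu, vv, Nat.cast_sub hl, map_add, map_sub, map_mul, map_natCast, MvPolynomial.eval_X,
    Matrix.cons_val_zero, Matrix.cons_val_one, Matrix.cons_val_fin_one]
  ring

theorem not_uu_add_vv_dvd_prod_linForm {s : Finset ℕ} {d : ℕ} (hs : ∀ l ∈ s, 2 * l < d) :
    ¬ uu + vv ∣ ∏ l ∈ s, linForm d l := by
  intro hdvd
  have hzero : evalOneNegOne (∏ l ∈ s, linForm d l) = 0 :=
    zero_dvd_iff.mp (evalOneNegOne_uu_add_vv ▸ map_dvd evalOneNegOne hdvd)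
  refine Finset.prod_ne_zero_iff.mpr (fun l hl => ?_) ((map_prod _ _ _).symm.trans hzero)
  have hlt := hs l hl
  rw [evalOneNegOne_linForm (by omega), sub_ne_zero]
  exact_mod_cast hlt.ne'

theorem stmt16_general (h j : ℕ) (hj1 : 1 < j) (hj2 : j < h) (d : ℕ) (hd : d = 2 * h)
    (Dj : R2)
    (hDj : (uu - vv) * Dj =
        (∏ l ∈ Finset.Icc (h - j + 1) h, ((l : R2) * vv + ((d - l : ℕ) : R2) * uu)) -
          ∏ l ∈ Finset.range j, ((l : R2) * vv + ((d - l : ℕ) : R2) * uu)) :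
    ((uu + vv) ∣ ∏ l ∈ Finset.Icc (h - j + 1) h, ((l : R2) * vv + ((d - l : ℕ) : R2) * uu)) ∧
    (¬ (uu + vv) ∣ ∏ l ∈ Finset.range j, ((l : R2) * vv + ((d - l : ℕ) : R2) * uu)) ∧
    (¬ (uu + vv) ∣ Dj) := by
  subst hd
  have hupper : uu + vv ∣ ∏ l ∈ Finset.Icc (h - j + 1) h, linForm (2 * h) l :=
    uu_add_vv_dvd_prod_linForm (Finset.mem_Icc.mpr ⟨by omega, le_rfl⟩)
  have hlower : ¬ uu + vv ∣ ∏ l ∈ Finset.range j, linForm (2 * h) l :=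
    not_uu_add_vv_dvd_prod_linForm fun l hl => by rw [Finset.mem_range] at hl; omega
  exact ⟨hupper, hlower, not_dvd_of_mul_eq_sub hupper hlower hDj⟩

/-- End of the proof of Proposition 4.5: `(u+v)` divides `∏_{l=h−j+1}^{h}(lv+(d−l)u)`,
does not divide `∏_{l=0}^{j−1}(lv+(d−l)u)`, and hence does not divide `D_j`. -/
theorem stmt16 (h j : ℕ) (hh : 2 < h) (hj1 : 1 < j) (hj2 : j < h) (d : ℕ) (hd : d = 2 * h)
    (Dj : R2)
    (hDj : (uu - vv) * Dj =
        (∏ l ∈ Finset.Icc (h - j + 1) h, ((l : R2) * vv + ((d - l : ℕ) : R2) * uu)) -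
          ∏ l ∈ Finset.range j, ((l : R2) * vv + ((d - l : ℕ) : R2) * uu)) :
    ((uu + vv) ∣ ∏ l ∈ Finset.Icc (h - j + 1) h, ((l : R2) * vv + ((d - l : ℕ) : R2) * uu)) ∧
    (¬ (uu + vv) ∣ ∏ l ∈ Finset.range j, ((l : R2) * vv + ((d - l : ℕ) : R2) * uu)) ∧
    (¬ (uu + vv) ∣ Dj) :=
  stmt16_general h j hj1 hj2 d hd Dj hDj
end
end
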